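/- arXiv:1704.06770 — 3 statements merged into one kernel-verified Lean document; each statement's English description precedes it below -/
import Mathlib

section
/- Let V be a Banach space and E, M ⊆ V nonempty bounded subsets. Then the Hausdorff distance satisfies h(E, M) = sup{|σ(v*, E) − σ(v*, M)| : v* ∈ V*, ‖v*‖ ≤ 1} when E and M are in addition closed and convex (Hörmander's formula). -/
open Metric

private lemma bdd_image {V : Type*} [NormedAddCommGroup V] [NormedSpace ℝ V]
    (f : V →L[ℝ] ℝ) {E : Set V} (hEb : Bornology.IsBounded E) :
    BddAbove (f '' E) :=
  (f.lipschitz.isBounded_image hEb).bddAbove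

private lemma aux_infDist_le {V : Type*} [NormedAddCommGroup V] [NormedSpace ℝ V]
    (E M : Set V) (hMne : M.Nonempty) (hEb : Bornology.IsBounded E)
    (hMb : Bornology.IsBounded M) (hMc : IsClosed M) (hMconv : Convex ℝ M)
    (hbdd : BddAbove {r : ℝ | ∃ f : V →L[ℝ] ℝ, ‖f‖ ≤ 1 ∧
        r = |sSup (f '' E) - sSup (f '' M)|})
    {e : V} (he : e ∈ E) :
    infDist e M ≤ sSup {r : ℝ | ∃ f : V →L[ℝ] ℝ, ‖f‖ ≤ 1 ∧
        r = |sSup (f '' E) - sSup (f '' M)|} := by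
  set S := {r : ℝ | ∃ f : V →L[ℝ] ℝ, ‖f‖ ≤ 1 ∧ r = |sSup (f '' E) - sSup (f '' M)|}
  have h0mem : (0 : ℝ) ∈ S := by
    refine ⟨0, by simp, ?_⟩
    have hc : ⇑(0 : V →L[ℝ] ℝ) = fun _ : V => (0:ℝ) := rfl
    rw [hc, Set.Nonempty.image_const ⟨e, he⟩, Set.Nonempty.image_const hMne,
      csSup_singleton]
    simp
  set d := infDist e M with hd_def
  rcases le_or_gt d 0 with hd | hd
  · exact hd.trans (le_csSup hbdd h0mem)
  -- separation
  have disj : Disjoint (ball e d) M := by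
    rw [Set.disjoint_left]
    intro a ha haM
    have h1 : d ≤ dist e a := infDist_le_dist_of_mem haM
    have h2 : dist a e < d := mem_ball.1 ha
    rw [dist_comm] at h2
    linarith
  obtain ⟨f, u, hf1, hf2⟩ :=
    geometric_hahn_banach_open (convex_ball e d) isOpen_ball hMconv disj
  obtain ⟨m₀, hm₀⟩ := id hMne
  have hfe : f e < u := hf1 e (mem_ball_self hd)
  have hfne : f ≠ 0 := by
    intro h
    have h1 : (0:ℝ) < u := by simpa [h] using hfe
    have h2 : u ≤ 0 := by simpa [h] using hf2 m₀ hm₀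
    linarith
  have hN : (0:ℝ) < ‖f‖ := norm_pos_iff.2 hfne
  -- key estimate: d * ‖f‖ ≤ u - f e
  have hA : d * ‖f‖ ≤ u - f e := by
    by_contra hcon
    push_neg at hcon
    have hlt : (u - f e) / d < ‖f‖ := by
      rw [div_lt_iff₀ hd]; linarith [hcon]
    obtain ⟨x, hx1, hx2⟩ := f.exists_lt_apply_of_lt_opNorm hlt
    rw [Real.norm_eq_abs] at hx2
    set y := if 0 ≤ f x then x else -x with hy
    have hfy : f y = |f x| := by
      by_cases hfx : 0 ≤ f x
      · simp [hy, hfx, abs_of_nonneg hfx]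
      · push_neg at hfx
        simp [hy, not_le.2 hfx, abs_of_neg hfx]
    have hyn : ‖y‖ < 1 := by
      by_cases hfx : 0 ≤ f x <;> simp [hy, hfx, hx1]
    have hball : e + d • y ∈ ball e d := by
      rw [mem_ball, dist_eq_norm]
      simp only [add_sub_cancel_left]
      rw [norm_smul, Real.norm_eq_abs, abs_of_pos hd]
      nlinarith
    have hsum := hf1 _ hball
    rw [map_add, map_smul, smul_eq_mul] at hsum
    have hlarge : (u - f e) / d < f y := hx2.trans_eq hfy.symm
    rw [div_lt_iff₀ hd] at hlarge
    nlinarith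
  -- the normalized functional
  set F : V →L[ℝ] ℝ := -(‖f‖⁻¹ • f) with hF
  have hFnorm : ‖F‖ ≤ 1 := by
    rw [hF, norm_neg, norm_smul ‖f‖⁻¹ f, Real.norm_eq_abs, abs_of_pos (inv_pos.2 hN),
      inv_mul_cancel₀ hN.ne']
  have hFapp : ∀ x, F x = -(‖f‖⁻¹ * f x) := by
    intro x; simp [hF, smul_eq_mul]
  have hinv : ‖f‖⁻¹ * ‖f‖ = 1 := inv_mul_cancel₀ hN.ne'
  have hinvpos : (0:ℝ) ≤ ‖f‖⁻¹ := (inv_pos.2 hN).le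
  have h2 : sSup (F '' M) ≤ -(‖f‖⁻¹ * u) := by
    apply csSup_le (Set.Nonempty.image _ hMne)
    rintro _ ⟨m, hm, rfl⟩
    rw [hFapp]
    have := hf2 m hm
    have := mul_le_mul_of_nonneg_left this hinvpos
    linarith
  have h1 : F e ≤ sSup (F '' E) := le_csSup (bdd_image F hEb) (Set.mem_image_of_mem _ he)
  have h3 : d - ‖f‖⁻¹ * u ≤ F e := by
    rw [hFapp]
    have hfe' : f e ≤ u - d * ‖f‖ := by linarith
    have := mul_le_mul_of_nonneg_left hfe' hinvpos
    nlinarith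
  have hkey : d ≤ sSup (F '' E) - sSup (F '' M) := by linarith
  have hmem : |sSup (F '' E) - sSup (F '' M)| ∈ S := ⟨F, hFnorm, rfl⟩
  exact le_trans (hkey.trans (le_abs_self _)) (le_csSup hbdd hmem)

/-- Hörmander's formula: for nonempty, bounded, closed, convex subsets `E, M` of a
Banach space, the Hausdorff distance equals the supremum over the dual unit ball of
the differences of support functions. -/
theorem stmt4
    {V : Type*} [NormedAddCommGroup V] [NormedSpace ℝ V] [CompleteSpace V]
    (E M : Set V) (hEne : E.Nonempty) (hMne : M.Nonempty)
    (hEb : Bornology.IsBounded E) (hMb : Bornology.IsBounded M)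
    (hEc : IsClosed E) (hMc : IsClosed M)
    (hEconv : Convex ℝ E) (hMconv : Convex ℝ M) :
    hausdorffDist E M =
      sSup {r : ℝ | ∃ f : V →L[ℝ] ℝ, ‖f‖ ≤ 1 ∧
        r = |sSup (f '' E) - sSup (f '' M)|} := by
  set S := {r : ℝ | ∃ f : V →L[ℝ] ℝ, ‖f‖ ≤ 1 ∧ r = |sSup (f '' E) - sSup (f '' M)|}
    with hS
  have hfin : EMetric.hausdorffEdist E M ≠ ⊤ :=
    hausdorffEdist_ne_top_of_nonempty_of_bounded hEne hMne hEb hMb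
  have hfin' : EMetric.hausdorffEdist M E ≠ ⊤ := by unfold EMetric.hausdorffEdist at *; rwa [EMetric.hausdorffEdist_comm]
  -- upper bound for each element of S
  have hub : ∀ r ∈ S, r ≤ hausdorffDist E M := by
    rintro _ ⟨f, hf, rfl⟩
    have key : ∀ (A B : Set V), A.Nonempty → B.Nonempty → Bornology.IsBounded A →
        Bornology.IsBounded B → EMetric.hausdorffEdist A B ≠ ⊤ →
        sSup (f '' A) ≤ sSup (f '' B) + hausdorffDist A B := by
      intro A B hAne hBne hAb hBb hfinAB
      apply csSup_le (Set.Nonempty.image _ hAne)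
      rintro _ ⟨a, ha, rfl⟩
      have hdH : infDist a B ≤ hausdorffDist A B :=
        infDist_le_hausdorffDist_of_mem ha hfinAB
      have : f a ≤ sSup (f '' B) + infDist a B := by
        apply le_of_forall_pos_le_add
        intro ε hε
        obtain ⟨b, hb, hdb⟩ := (infDist_lt_iff hBne).1
          (lt_add_of_pos_right (infDist a B) hε)
        have hfb : f b ≤ sSup (f '' B) := le_csSup (bdd_image f hBb)
          (Set.mem_image_of_mem _ hb)
        have hl : f a - f b ≤ dist a b := by
          have h1 : f a - f b = f (a - b) := by rw [map_sub]
          have h2 : f (a - b) ≤ ‖f (a - b)‖ := le_abs_self _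
          have h3 : ‖f (a - b)‖ ≤ ‖f‖ * ‖a - b‖ := f.le_opNorm _
          have h4 : ‖f‖ * ‖a - b‖ ≤ 1 * ‖a - b‖ :=
            mul_le_mul_of_nonneg_right hf (norm_nonneg _)
          rw [h1, ← dist_eq_norm] at *
          linarith
        linarith
      linarith
    have k1 := key E M hEne hMne hEb hMb hfin
    have k2 := key M E hMne hEne hMb hEb hfin'
    rw [hausdorffDist_comm] at k2
    rw [abs_sub_le_iff]
    exact ⟨by linarith, by linarith⟩
  have hbdd : BddAbove S := ⟨hausdorffDist E M, hub⟩
  have h0mem : (0 : ℝ) ∈ S := by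
    refine ⟨0, by simp, ?_⟩
    have hc : ⇑(0 : V →L[ℝ] ℝ) = fun _ : V => (0:ℝ) := rfl
    rw [hc, Set.Nonempty.image_const hEne, Set.Nonempty.image_const hMne,
      csSup_singleton]
    simp
  have hSeq : {r : ℝ | ∃ f : V →L[ℝ] ℝ, ‖f‖ ≤ 1 ∧
      r = |sSup (f '' M) - sSup (f '' E)|} = S := by
    ext r
    constructor
    · rintro ⟨f, hf, rfl⟩; exact ⟨f, hf, abs_sub_comm _ _⟩
    · rintro ⟨f, hf, rfl⟩; exact ⟨f, hf, abs_sub_comm _ _⟩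
  apply le_antisymm
  · apply hausdorffDist_le_of_infDist (le_csSup hbdd h0mem)
    · intro x hx
      exact aux_infDist_le E M hMne hEb hMb hMc hMconv hbdd hx
    · intro x hx
      have := aux_infDist_le M E hEne hMb hEb hEc hEconv (by rwa [hSeq]) hx
      rwa [hSeq] at this
  · exact csSup_le ⟨0, h0mem⟩ hub
end

section
/- Let k ∈ L¹([0,b]) be nonnegative, τ(t) = ∫₀ᵗ k(s) ds, η ∈ L¹([0,b]) nonnegative, ε > 0, and b > 0. Define β_n(t) = 2∫₀ᵗ η(s)·(τ(t) − τ(s))^{n−1}/(n−1)! ds + 2b·(Σ_{k=0}^{n} ε/2^{k+1})·τ(t)^{n−1}/(n−1)!. Then ∫₀ᵗ k(s) β_n(s) ds ≤ 2∫₀ᵗ η(s)·(τ(t) − τ(s))^{n}/n! ds + 2b·(Σ_{k=0}^{n} ε/2^{k+1})·τ(t)^{n}/n! for all t ∈ [0,b]. -/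
open intervalIntegral Finset MeasureTheory Set Filter

lemma pow_sandwich {a c : ℝ} (h0 : 0 ≤ a) (hac : a ≤ c) (j : ℕ) :
    (j + 1 : ℝ) * a ^ j * (c - a) ≤ c ^ (j + 1) - a ^ (j + 1) ∧
      c ^ (j + 1) - a ^ (j + 1) ≤ (j + 1 : ℝ) * c ^ j * (c - a) := by
  have hc0 : 0 ≤ c := h0.trans hac
  have key : c ^ (j + 1) - a ^ (j + 1)
      = (∑ i ∈ Finset.range (j + 1), c ^ i * a ^ (j - i)) * (c - a) := by
    have := geom_sum₂_mul c a (j + 1)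
    simpa using this.symm
  have hsum_lo : (j + 1 : ℝ) * a ^ j ≤ ∑ i ∈ Finset.range (j + 1), c ^ i * a ^ (j - i) := by
    have : ∀ i ∈ Finset.range (j + 1), a ^ j ≤ c ^ i * a ^ (j - i) := by
      intro i hi
      have hij : i ≤ j := Nat.lt_succ_iff.mp (Finset.mem_range.mp hi)
      have h1 : a ^ j = a ^ i * a ^ (j - i) := by rw [← pow_add, Nat.add_sub_cancel' hij]
      rw [h1]
      exact mul_le_mul_of_nonneg_right (pow_le_pow_left₀ h0 hac i) (pow_nonneg h0 _)
    calc (j + 1 : ℝ) * a ^ j = ∑ _i ∈ Finset.range (j + 1), a ^ j := by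
          simp [Finset.sum_const, mul_comm]
      _ ≤ _ := Finset.sum_le_sum this
  have hsum_hi : (∑ i ∈ Finset.range (j + 1), c ^ i * a ^ (j - i)) ≤ (j + 1 : ℝ) * c ^ j := by
    have : ∀ i ∈ Finset.range (j + 1), c ^ i * a ^ (j - i) ≤ c ^ j := by
      intro i hi
      have hij : i ≤ j := Nat.lt_succ_iff.mp (Finset.mem_range.mp hi)
      have h1 : c ^ j = c ^ i * c ^ (j - i) := by rw [← pow_add, Nat.add_sub_cancel' hij]
      rw [h1]
      exact mul_le_mul_of_nonneg_left (pow_le_pow_left₀ h0 hac _) (pow_nonneg hc0 _)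
    calc (∑ i ∈ Finset.range (j + 1), c ^ i * a ^ (j - i)) ≤ ∑ _i ∈ Finset.range (j + 1), c ^ j :=
          Finset.sum_le_sum this
      _ = (j + 1 : ℝ) * c ^ j := by simp [Finset.sum_const, mul_comm]
  have hca : 0 ≤ c - a := sub_nonneg.mpr hac
  constructor
  · rw [key]; exact mul_le_mul_of_nonneg_right hsum_lo hca
  · rw [key]; exact mul_le_mul_of_nonneg_right hsum_hi hca

lemma key_eq (b : ℝ) (hb : 0 ≤ b) (k τ A B : ℝ → ℝ)
    (hk : MeasureTheory.IntegrableOn k (Set.Icc 0 b))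
    (hknn : ∀ s ∈ Set.Icc (0:ℝ) b, 0 ≤ k s)
    (hτ : ∀ t, τ t = ∫ s in (0:ℝ)..t, k s)
    (hA : MonotoneOn A (Set.Icc 0 b))
    (hAint : ∀ u v : ℝ, u ∈ Set.Icc (0:ℝ) b → v ∈ Set.Icc (0:ℝ) b →
      IntervalIntegrable (fun s => k s * A s) MeasureTheory.volume u v)
    (hlow : ∀ s₁ s₂ : ℝ, s₁ ∈ Set.Icc (0:ℝ) b → s₂ ∈ Set.Icc (0:ℝ) b → s₁ ≤ s₂ →
      A s₁ * (τ s₂ - τ s₁) ≤ B s₂ - B s₁)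
    (hup : ∀ s₁ s₂ : ℝ, s₁ ∈ Set.Icc (0:ℝ) b → s₂ ∈ Set.Icc (0:ℝ) b → s₁ ≤ s₂ →
      B s₂ - B s₁ ≤ A s₂ * (τ s₂ - τ s₁)) :
    ∀ t ∈ Set.Icc (0:ℝ) b, (∫ s in (0:ℝ)..t, k s * A s) = B t - B 0 := by
  have hsub : ∀ u v : ℝ, u ∈ Set.Icc (0:ℝ) b → v ∈ Set.Icc (0:ℝ) b →
      Set.uIcc u v ⊆ Set.Icc (0:ℝ) b := by
    intro u v hu hv
    rw [← Set.uIcc_of_le hb]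
    exact Set.uIcc_subset_uIcc (by rwa [Set.uIcc_of_le hb]) (by rwa [Set.uIcc_of_le hb])
  have hkII : ∀ u v : ℝ, u ∈ Set.Icc (0:ℝ) b → v ∈ Set.Icc (0:ℝ) b →
      IntervalIntegrable k MeasureTheory.volume u v := fun u v hu hv =>
    (hk.mono_set (hsub u v hu hv)).intervalIntegrable
  have hτd : ∀ u v : ℝ, u ∈ Set.Icc (0:ℝ) b → v ∈ Set.Icc (0:ℝ) b →
      τ v - τ u = ∫ s in u..v, k s := by
    intro u v hu hv
    rw [hτ, hτ]
    exact integral_interval_sub_left (hkII 0 v (Set.left_mem_Icc.2 hb) hv)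
      (hkII 0 u (Set.left_mem_Icc.2 hb) hu)
  have hτmono : MonotoneOn τ (Set.Icc 0 b) := by
    intro x hx y hy hxy
    have h1 : τ y - τ x = ∫ s in x..y, k s := hτd x y hx hy
    have h2 : 0 ≤ ∫ s in x..y, k s :=
      intervalIntegral.integral_nonneg hxy fun u hu =>
        hknn u ⟨hx.1.trans hu.1, hu.2.trans hy.2⟩
    linarith
  have hτcont : ContinuousOn τ (Set.Icc 0 b) := by
    have h := continuousOn_primitive_interval'
      (hkII 0 b (Set.left_mem_Icc.2 hb) (Set.right_mem_Icc.2 hb)) Set.left_mem_uIcc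
    rw [Set.uIcc_of_le hb] at h
    exact h.congr fun x _ => hτ x
  have claim : ∀ N : ℕ, ∀ r t : ℝ, r ∈ Set.Icc (0:ℝ) b → t ∈ Set.Icc (0:ℝ) b → r ≤ t →
      |(∫ s in r..t, k s * A s) - (B t - B r)| ≤ (A t - A r) * (τ t - τ r) / 2 ^ N := by
    intro N
    induction N with
    | zero =>
      intro r t hr ht hrt
      have hτrt : ∀ x ∈ Set.Icc r t, x ∈ Set.Icc (0:ℝ) b := fun x hx =>
        ⟨hr.1.trans hx.1, hx.2.trans ht.2⟩
      have hket : ∫ s in r..t, k s = τ t - τ r := (hτd r t hr ht).symm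
      have h1 : A r * (τ t - τ r) ≤ ∫ s in r..t, k s * A s := by
        have : (∫ s in r..t, k s * A r) ≤ ∫ s in r..t, k s * A s :=
          intervalIntegral.integral_mono_on hrt ((hkII r t hr ht).mul_const _)
            (hAint r t hr ht) fun x hx =>
              mul_le_mul_of_nonneg_left (hA hr (hτrt x hx) hx.1) (hknn x (hτrt x hx))
        calc A r * (τ t - τ r) = (∫ s in r..t, k s) * A r := by rw [hket]; ring
          _ = ∫ s in r..t, k s * A r := (intervalIntegral.integral_mul_const _ _).symm
          _ ≤ _ := this
      have h2 : (∫ s in r..t, k s * A s) ≤ A t * (τ t - τ r) := by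
        have : (∫ s in r..t, k s * A s) ≤ ∫ s in r..t, k s * A t :=
          intervalIntegral.integral_mono_on hrt (hAint r t hr ht)
            ((hkII r t hr ht).mul_const _) fun x hx =>
              mul_le_mul_of_nonneg_left (hA (hτrt x hx) ht hx.2) (hknn x (hτrt x hx))
        calc (∫ s in r..t, k s * A s) ≤ ∫ s in r..t, k s * A t := this
          _ = (∫ s in r..t, k s) * A t := intervalIntegral.integral_mul_const _ _
          _ = A t * (τ t - τ r) := by rw [hket]; ring
      have h3 := hlow r t hr ht hrt
      have h4 := hup r t hr ht hrt
      rw [pow_zero, div_one, abs_sub_le_iff]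
      constructor <;> nlinarith
    | succ N ih =>
      intro r t hr ht hrt
      have hτrt : τ r ≤ τ t := hτmono hr ht hrt
      have hmem : (τ r + τ t) / 2 ∈ Set.Icc (τ r) (τ t) := by
        constructor <;> linarith
      obtain ⟨w, hw, hτw⟩ :=
        intermediate_value_Icc hrt (hτcont.mono fun x hx => ⟨hr.1.trans hx.1, hx.2.trans ht.2⟩) hmem
      have hwmem : w ∈ Set.Icc (0:ℝ) b := ⟨hr.1.trans hw.1, hw.2.trans ht.2⟩
      have e1 := ih r w hr hwmem hw.1
      have e2 := ih w t hwmem ht hw.2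
      have hδ1 : τ w - τ r = (τ t - τ r) / 2 := by rw [hτw]; ring
      have hδ2 : τ t - τ w = (τ t - τ r) / 2 := by rw [hτw]; ring
      have hsplit : (∫ s in r..t, k s * A s)
          = (∫ s in r..w, k s * A s) + ∫ s in w..t, k s * A s :=
        (intervalIntegral.integral_add_adjacent_intervals (hAint r w hr hwmem)
          (hAint w t hwmem ht)).symm
      calc |(∫ s in r..t, k s * A s) - (B t - B r)|
          = |((∫ s in r..w, k s * A s) - (B w - B r))
              + ((∫ s in w..t, k s * A s) - (B t - B w))| := by rw [hsplit]; ring_nf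
        _ ≤ |(∫ s in r..w, k s * A s) - (B w - B r)|
              + |(∫ s in w..t, k s * A s) - (B t - B w)| := abs_add_le _ _
        _ ≤ (A w - A r) * (τ w - τ r) / 2 ^ N + (A t - A w) * (τ t - τ w) / 2 ^ N :=
            add_le_add e1 e2
        _ = (A t - A r) * (τ t - τ r) / 2 ^ (N + 1) := by
            rw [hδ1, hδ2, pow_succ]; ring
  intro t ht
  have h0b : (0:ℝ) ∈ Set.Icc (0:ℝ) b := Set.left_mem_Icc.2 hb
  have hX : ∀ N : ℕ, |(∫ s in (0:ℝ)..t, k s * A s) - (B t - B 0)|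
      ≤ (A t - A 0) * (τ t - τ 0) / 2 ^ N := fun N => claim N 0 t h0b ht ht.1
  have htend : Tendsto (fun N : ℕ => (A t - A 0) * (τ t - τ 0) / 2 ^ N) atTop (nhds 0) :=
    Filter.Tendsto.div_atTop tendsto_const_nhds
      (tendsto_pow_atTop_atTop_of_one_lt (by norm_num : (1:ℝ) < 2))
  have habs : |(∫ s in (0:ℝ)..t, k s * A s) - (B t - B 0)| ≤ 0 :=
    ge_of_tendsto htend (Filter.Eventually.of_forall hX)
  have := abs_nonpos_iff.mp habs
  linarith [this]

set_option maxHeartbeats 1000000 in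
/-- The key inductive integral estimate: with `τ(t) = ∫₀ᵗ k`,
`∫₀ᵗ k(s) βₙ(s) ds ≤ 2∫₀ᵗ η(s)(τ(t)-τ(s))ⁿ/n! ds + 2b (Σ_{k≤n} ε/2^{k+1}) τ(t)ⁿ/n!`. -/
theorem stmt6
    (b ε : ℝ) (hb : 0 < b) (hε : 0 < ε)
    (k η : ℝ → ℝ)
    (hk : MeasureTheory.IntegrableOn k (Set.Icc 0 b))
    (hknn : ∀ s ∈ Set.Icc (0:ℝ) b, 0 ≤ k s)
    (hη : MeasureTheory.IntegrableOn η (Set.Icc 0 b))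
    (hηnn : ∀ s ∈ Set.Icc (0:ℝ) b, 0 ≤ η s)
    (τ : ℝ → ℝ) (hτ : ∀ t, τ t = ∫ s in (0:ℝ)..t, k s)
    (n : ℕ) (hn : 1 ≤ n)
    (β : ℝ → ℝ)
    (hβ : ∀ t, β t =
      2 * (∫ s in (0:ℝ)..t, η s * (τ t - τ s) ^ (n - 1) / (Nat.factorial (n - 1))) +
      2 * b * (∑ j ∈ Finset.range (n + 1), ε / 2 ^ (j + 1)) *
        (τ t ^ (n - 1) / (Nat.factorial (n - 1)))) :
    ∀ t ∈ Set.Icc (0:ℝ) b,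
      (∫ s in (0:ℝ)..t, k s * β s) ≤
        2 * (∫ s in (0:ℝ)..t, η s * (τ t - τ s) ^ n / (Nat.factorial n)) +
        2 * b * (∑ j ∈ Finset.range (n + 1), ε / 2 ^ (j + 1)) *
          (τ t ^ n / (Nat.factorial n)) := by
  obtain ⟨m, rfl⟩ : ∃ m, n = m + 1 := ⟨n - 1, (Nat.succ_pred_eq_of_pos hn).symm⟩
  simp only [Nat.add_sub_cancel] at hβ
  set S : ℝ := ∑ j ∈ Finset.range (m + 1 + 1), ε / 2 ^ (j + 1) with hS
  have hS0 : 0 ≤ S := Finset.sum_nonneg fun j _ => by positivity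
  have hD0 : 0 ≤ b * S := mul_nonneg hb.le hS0
  -- basic facts about τ
  have hsub : ∀ u v : ℝ, u ∈ Set.Icc (0:ℝ) b → v ∈ Set.Icc (0:ℝ) b →
      Set.uIcc u v ⊆ Set.Icc (0:ℝ) b := by
    intro u v hu hv
    rw [← Set.uIcc_of_le hb.le]
    exact Set.uIcc_subset_uIcc (by rwa [Set.uIcc_of_le hb.le]) (by rwa [Set.uIcc_of_le hb.le])
  have hkII : ∀ u v : ℝ, u ∈ Set.Icc (0:ℝ) b → v ∈ Set.Icc (0:ℝ) b →
      IntervalIntegrable k MeasureTheory.volume u v := fun u v hu hv =>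
    (hk.mono_set (hsub u v hu hv)).intervalIntegrable
  have h0b : (0:ℝ) ∈ Set.Icc (0:ℝ) b := Set.left_mem_Icc.2 hb.le
  have hbb : b ∈ Set.Icc (0:ℝ) b := Set.right_mem_Icc.2 hb.le
  have hτd : ∀ u v : ℝ, u ∈ Set.Icc (0:ℝ) b → v ∈ Set.Icc (0:ℝ) b →
      τ v - τ u = ∫ s in u..v, k s := by
    intro u v hu hv
    rw [hτ, hτ]
    exact integral_interval_sub_left (hkII 0 v h0b hv) (hkII 0 u h0b hu)
  have hτmono : MonotoneOn τ (Set.Icc 0 b) := by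
    intro x hx y hy hxy
    have h1 : τ y - τ x = ∫ s in x..y, k s := hτd x y hx hy
    have h2 : 0 ≤ ∫ s in x..y, k s :=
      intervalIntegral.integral_nonneg hxy fun u hu =>
        hknn u ⟨hx.1.trans hu.1, hu.2.trans hy.2⟩
    linarith
  have hτcont : ContinuousOn τ (Set.Icc 0 b) := by
    have h := continuousOn_primitive_interval' (hkII 0 b h0b hbb) Set.left_mem_uIcc
    rw [Set.uIcc_of_le hb.le] at h
    exact h.congr fun x _ => hτ x
  have hτ0 : τ 0 = 0 := by rw [hτ]; simp
  have hτnn : ∀ s ∈ Set.Icc (0:ℝ) b, 0 ≤ τ s := fun s hs => by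
    have := hτmono h0b hs hs.1
    rw [hτ0] at this; exact this
  -- integrability of the weighted integrands
  have hII : ∀ (j : ℕ) (c u v : ℝ), u ∈ Set.Icc (0:ℝ) b → v ∈ Set.Icc (0:ℝ) b →
      IntervalIntegrable (fun x => η x * (c - τ x) ^ j) MeasureTheory.volume u v := by
    intro j c u v hu hv
    refine (IntegrableOn.mul_continuousOn (hη.mono_set (hsub u v hu hv)) ?_
      isCompact_uIcc).intervalIntegrable
    exact ((continuousOn_const.sub (hτcont.mono (hsub u v hu hv))).pow j)
  -- the two auxiliary functions
  set A : ℝ → ℝ := fun s =>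
    ((m : ℝ) + 1) * ((∫ x in (0:ℝ)..s, η x * (τ s - τ x) ^ m) + b * S * τ s ^ m) with hA
  set B : ℝ → ℝ := fun s =>
    (∫ x in (0:ℝ)..s, η x * (τ s - τ x) ^ (m + 1)) + b * S * τ s ^ (m + 1) with hB
  -- monotonicity of A
  have hJmono : ∀ s₁ s₂ : ℝ, s₁ ∈ Set.Icc (0:ℝ) b → s₂ ∈ Set.Icc (0:ℝ) b → s₁ ≤ s₂ → ∀ j : ℕ,
      (∫ x in (0:ℝ)..s₁, η x * (τ s₁ - τ x) ^ j) ≤ ∫ x in (0:ℝ)..s₂, η x * (τ s₂ - τ x) ^ j := by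
    intro s₁ s₂ h₁ h₂ h12 j
    have hmem : ∀ x ∈ Set.Icc (0:ℝ) s₁, x ∈ Set.Icc (0:ℝ) b := fun x hx =>
      ⟨hx.1, hx.2.trans h₁.2⟩
    have step1 : (∫ x in (0:ℝ)..s₁, η x * (τ s₁ - τ x) ^ j)
        ≤ ∫ x in (0:ℝ)..s₁, η x * (τ s₂ - τ x) ^ j := by
      refine intervalIntegral.integral_mono_on h₁.1 (hII j (τ s₁) 0 s₁ h0b h₁)
        (hII j (τ s₂) 0 s₁ h0b h₁) fun x hx => ?_
      have hx1 : τ x ≤ τ s₁ := hτmono (hmem x hx) h₁ hx.2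
      have hx2 : τ s₁ ≤ τ s₂ := hτmono h₁ h₂ h12
      exact mul_le_mul_of_nonneg_left
        (pow_le_pow_left₀ (by linarith) (by linarith) j) (hηnn x (hmem x hx))
    have step2 : (∫ x in (0:ℝ)..s₁, η x * (τ s₂ - τ x) ^ j)
        ≤ ∫ x in (0:ℝ)..s₂, η x * (τ s₂ - τ x) ^ j := by
      have hadd := intervalIntegral.integral_add_adjacent_intervals
        (hII j (τ s₂) 0 s₁ h0b h₁) (hII j (τ s₂) s₁ s₂ h₁ h₂)
      have hnn : 0 ≤ ∫ x in s₁..s₂, η x * (τ s₂ - τ x) ^ j := by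
        refine intervalIntegral.integral_nonneg h12 fun x hx => ?_
        have hxb : x ∈ Set.Icc (0:ℝ) b := ⟨h₁.1.trans hx.1, hx.2.trans h₂.2⟩
        have : τ x ≤ τ s₂ := hτmono hxb h₂ hx.2
        exact mul_nonneg (hηnn x hxb) (pow_nonneg (by linarith) j)
      linarith
    linarith
  have hAmono : MonotoneOn A (Set.Icc 0 b) := by
    intro s₁ h₁ s₂ h₂ h12
    have h1 := hJmono s₁ s₂ h₁ h₂ h12 m
    have h2 : τ s₁ ^ m ≤ τ s₂ ^ m :=
      pow_le_pow_left₀ (hτnn s₁ h₁) (hτmono h₁ h₂ h12) m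
    have hm1 : (0:ℝ) ≤ (m : ℝ) + 1 := by positivity
    have h3 : b * S * τ s₁ ^ m ≤ b * S * τ s₂ ^ m := mul_le_mul_of_nonneg_left h2 hD0
    simp only [hA]
    exact mul_le_mul_of_nonneg_left (by linarith) hm1
  -- integrability of k * A
  have hAint : ∀ u v : ℝ, u ∈ Set.Icc (0:ℝ) b → v ∈ Set.Icc (0:ℝ) b →
      IntervalIntegrable (fun s => k s * A s) MeasureTheory.volume u v := by
    have hmeas : AEStronglyMeasurable A (MeasureTheory.volume.restrict (Set.Icc (0:ℝ) b)) :=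
      (aemeasurable_restrict_of_monotoneOn measurableSet_Icc hAmono).aestronglyMeasurable
    have hbd : ∀ᵐ x ∂(MeasureTheory.volume.restrict (Set.Icc (0:ℝ) b)),
        ‖A x‖ ≤ max |A 0| |A b| := by
      filter_upwards [MeasureTheory.ae_restrict_mem measurableSet_Icc] with x hx
      rw [Real.norm_eq_abs]
      exact abs_le_max_abs_abs (hAmono h0b hx hx.1) (hAmono hx hbb hx.2)
    have hint : MeasureTheory.IntegrableOn (fun s => k s * A s) (Set.Icc (0:ℝ) b) := by
      have := MeasureTheory.Integrable.bdd_mul (f := A) (g := k) hk hmeas hbd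
      exact this.congr (MeasureTheory.ae_of_all _ fun x => mul_comm (A x) (k x))
    exact fun u v hu hv => (hint.mono_set (hsub u v hu hv)).intervalIntegrable
  -- the bracket estimates
  have hbrack : ∀ s₁ s₂ : ℝ, s₁ ∈ Set.Icc (0:ℝ) b → s₂ ∈ Set.Icc (0:ℝ) b → s₁ ≤ s₂ →
      A s₁ * (τ s₂ - τ s₁) ≤ B s₂ - B s₁ ∧ B s₂ - B s₁ ≤ A s₂ * (τ s₂ - τ s₁) := by
    intro s₁ s₂ h₁ h₂ h12
    have hmem1 : ∀ x ∈ Set.Icc (0:ℝ) s₁, x ∈ Set.Icc (0:ℝ) b := fun x hx =>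
      ⟨hx.1, hx.2.trans h₁.2⟩
    have hmem2 : ∀ x ∈ Set.Icc s₁ s₂, x ∈ Set.Icc (0:ℝ) b := fun x hx =>
      ⟨h₁.1.trans hx.1, hx.2.trans h₂.2⟩
    have ht12 : τ s₁ ≤ τ s₂ := hτmono h₁ h₂ h12
    have hm1 : (1:ℝ) ≤ (m : ℝ) + 1 := by
      have : (0:ℝ) ≤ (m : ℝ) := Nat.cast_nonneg m
      linarith
    -- splits
    have hsplitI : (∫ x in (0:ℝ)..s₂, η x * (τ s₂ - τ x) ^ (m + 1))
        = (∫ x in (0:ℝ)..s₁, η x * (τ s₂ - τ x) ^ (m + 1))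
          + ∫ x in s₁..s₂, η x * (τ s₂ - τ x) ^ (m + 1) :=
      (intervalIntegral.integral_add_adjacent_intervals
        (hII (m + 1) (τ s₂) 0 s₁ h0b h₁) (hII (m + 1) (τ s₂) s₁ s₂ h₁ h₂)).symm
    have hsplitJ : (∫ x in (0:ℝ)..s₂, η x * (τ s₂ - τ x) ^ m)
        = (∫ x in (0:ℝ)..s₁, η x * (τ s₂ - τ x) ^ m)
          + ∫ x in s₁..s₂, η x * (τ s₂ - τ x) ^ m :=
      (intervalIntegral.integral_add_adjacent_intervals
        (hII m (τ s₂) 0 s₁ h0b h₁) (hII m (τ s₂) s₁ s₂ h₁ h₂)).symm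
    -- pointwise facts on [0, s₁]
    have hsand : ∀ x ∈ Set.Icc (0:ℝ) s₁,
        ((m : ℝ) + 1) * (τ s₁ - τ x) ^ m * (τ s₂ - τ s₁)
            ≤ (τ s₂ - τ x) ^ (m + 1) - (τ s₁ - τ x) ^ (m + 1) ∧
          (τ s₂ - τ x) ^ (m + 1) - (τ s₁ - τ x) ^ (m + 1)
            ≤ ((m : ℝ) + 1) * (τ s₂ - τ x) ^ m * (τ s₂ - τ s₁) := by
      intro x hx
      have hx1 : τ x ≤ τ s₁ := hτmono (hmem1 x hx) h₁ hx.2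
      have h := pow_sandwich (a := τ s₁ - τ x) (c := τ s₂ - τ x)
        (by linarith) (by linarith) m
      constructor
      · have := h.1
        nlinarith
      · have := h.2
        nlinarith
    -- upper estimate, first piece
    have U1 : (∫ x in (0:ℝ)..s₁, η x * (τ s₂ - τ x) ^ (m + 1))
          - (∫ x in (0:ℝ)..s₁, η x * (τ s₁ - τ x) ^ (m + 1))
        ≤ ((m : ℝ) + 1) * (τ s₂ - τ s₁) * ∫ x in (0:ℝ)..s₁, η x * (τ s₂ - τ x) ^ m := by
      rw [← intervalIntegral.integral_sub (hII (m + 1) (τ s₂) 0 s₁ h0b h₁)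
        (hII (m + 1) (τ s₁) 0 s₁ h0b h₁), ← intervalIntegral.integral_const_mul]
      refine intervalIntegral.integral_mono_on h₁.1
        ((hII (m + 1) (τ s₂) 0 s₁ h0b h₁).sub (hII (m + 1) (τ s₁) 0 s₁ h0b h₁))
        ((hII m (τ s₂) 0 s₁ h0b h₁).const_mul _) fun x hx => ?_
      have hη0 := hηnn x (hmem1 x hx)
      have h := (hsand x hx).2
      nlinarith [mul_le_mul_of_nonneg_left h hη0]
    -- lower estimate, first piece
    have L1 : ((m : ℝ) + 1) * (τ s₂ - τ s₁) * (∫ x in (0:ℝ)..s₁, η x * (τ s₁ - τ x) ^ m)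
        ≤ (∫ x in (0:ℝ)..s₁, η x * (τ s₂ - τ x) ^ (m + 1))
          - ∫ x in (0:ℝ)..s₁, η x * (τ s₁ - τ x) ^ (m + 1) := by
      rw [← intervalIntegral.integral_sub (hII (m + 1) (τ s₂) 0 s₁ h0b h₁)
        (hII (m + 1) (τ s₁) 0 s₁ h0b h₁), ← intervalIntegral.integral_const_mul]
      refine intervalIntegral.integral_mono_on h₁.1
        ((hII m (τ s₁) 0 s₁ h0b h₁).const_mul _)
        ((hII (m + 1) (τ s₂) 0 s₁ h0b h₁).sub (hII (m + 1) (τ s₁) 0 s₁ h0b h₁)) fun x hx => ?_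
      have hη0 := hηnn x (hmem1 x hx)
      have h := (hsand x hx).1
      nlinarith [mul_le_mul_of_nonneg_left h hη0]
    -- upper estimate, middle piece
    have U2 : (∫ x in s₁..s₂, η x * (τ s₂ - τ x) ^ (m + 1))
        ≤ ((m : ℝ) + 1) * (τ s₂ - τ s₁) * ∫ x in s₁..s₂, η x * (τ s₂ - τ x) ^ m := by
      rw [← intervalIntegral.integral_const_mul]
      refine intervalIntegral.integral_mono_on h12 (hII (m + 1) (τ s₂) s₁ s₂ h₁ h₂)
        ((hII m (τ s₂) s₁ s₂ h₁ h₂).const_mul _) fun x hx => ?_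
      have hxb := hmem2 x hx
      have hη0 := hηnn x hxb
      have hx1 : τ s₁ ≤ τ x := hτmono h₁ hxb hx.1
      have hx2 : τ x ≤ τ s₂ := hτmono hxb h₂ hx.2
      have hp : (0:ℝ) ≤ (τ s₂ - τ x) ^ m := pow_nonneg (by linarith) m
      have hq : (τ s₂ - τ x) ^ (m + 1) = (τ s₂ - τ x) ^ m * (τ s₂ - τ x) := pow_succ _ _
      have hcoef : τ s₂ - τ x ≤ ((m : ℝ) + 1) * (τ s₂ - τ s₁) := by
        nlinarith [mul_nonneg (Nat.cast_nonneg m : (0:ℝ) ≤ (m : ℝ)) (sub_nonneg.mpr ht12)]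
      have h5 : η x * (τ s₂ - τ x) ^ m * (τ s₂ - τ x)
          ≤ η x * (τ s₂ - τ x) ^ m * (((m : ℝ) + 1) * (τ s₂ - τ s₁)) :=
        mul_le_mul_of_nonneg_left hcoef (mul_nonneg hη0 hp)
      rw [hq]
      linarith [h5]
    -- middle piece nonneg
    have L2 : 0 ≤ ∫ x in s₁..s₂, η x * (τ s₂ - τ x) ^ (m + 1) := by
      refine intervalIntegral.integral_nonneg h12 fun x hx => ?_
      have hxb := hmem2 x hx
      have : τ x ≤ τ s₂ := hτmono hxb h₂ hx.2
      exact mul_nonneg (hηnn x hxb) (pow_nonneg (by linarith) _)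
    -- the power terms
    have hsandτ := pow_sandwich (a := τ s₁) (c := τ s₂) (hτnn s₁ h₁) ht12 m
    constructor
    · have E3 : b * S * (((m : ℝ) + 1) * τ s₁ ^ m * (τ s₂ - τ s₁))
          ≤ b * S * (τ s₂ ^ (m + 1) - τ s₁ ^ (m + 1)) :=
        mul_le_mul_of_nonneg_left hsandτ.1 hD0
      simp only [hA, hB]
      linarith [L1, L2, E3, hsplitI]
    · have E3 : b * S * (τ s₂ ^ (m + 1) - τ s₁ ^ (m + 1))
          ≤ b * S * (((m : ℝ) + 1) * τ s₂ ^ m * (τ s₂ - τ s₁)) :=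
        mul_le_mul_of_nonneg_left hsandτ.2 hD0
      simp only [hA, hB]
      rw [hsplitI, hsplitJ]
      linarith [U1, U2, E3]
  -- apply the key identity
  have hkey := key_eq b hb.le k τ A B hk hknn hτ hAmono hAint
    (fun s₁ s₂ h₁ h₂ h12 => (hbrack s₁ s₂ h₁ h₂ h12).1)
    (fun s₁ s₂ h₁ h₂ h12 => (hbrack s₁ s₂ h₁ h₂ h12).2)
  intro t ht
  have hB0 : B 0 = 0 := by
    simp [hB, hτ0, intervalIntegral.integral_same, zero_pow (Nat.succ_ne_zero m)]
  have hfac : ((Nat.factorial (m + 1) : ℝ)) = ((m : ℝ) + 1) * (Nat.factorial m : ℝ) := by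
    push_cast [Nat.factorial_succ]
    ring
  have hfacm : (0:ℝ) < (Nat.factorial m : ℝ) := by
    exact_mod_cast Nat.factorial_pos m
  have hβA : ∀ s, β s = 2 / (Nat.factorial (m + 1) : ℝ) * A s := by
    intro s
    rw [hβ s, intervalIntegral.integral_div, hfac]
    simp only [hA]
    field_simp
  have hLHS : (∫ s in (0:ℝ)..t, k s * β s)
      = 2 / (Nat.factorial (m + 1) : ℝ) * ∫ s in (0:ℝ)..t, k s * A s := by
    rw [intervalIntegral.integral_congr
      (g := fun s => 2 / (Nat.factorial (m + 1) : ℝ) * (k s * A s))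
      (fun s _ => by rw [hβA s]; ring)]
    exact intervalIntegral.integral_const_mul _ _
  have hRHS : 2 * (∫ s in (0:ℝ)..t, η s * (τ t - τ s) ^ (m + 1) / (Nat.factorial (m + 1)))
        + 2 * b * S * (τ t ^ (m + 1) / (Nat.factorial (m + 1)))
      = 2 / (Nat.factorial (m + 1) : ℝ) * B t := by
    rw [intervalIntegral.integral_div]
    simp only [hB]
    field_simp
  rw [hLHS, hRHS, hkey t ht, hB0, sub_zero]
end

section
/- Let H be a Hilbert space, u : [0,b] → H absolutely continuous with (1/2)|u(t)|² ≤ (1/2)c² + ∫₀ᵗ g(s)|u(s)| ds for all t, where g ∈ L¹([0,b]) is nonnegative and c ≥ 0. Then |u(t)| ≤ c + ∫₀ᵗ g(s) ds for all t ∈ [0,b]. -/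
set_option maxHeartbeats 1000000

open MeasureTheory Set

/-- Brezis' quadratic Gronwall lemma: if
`(1/2)|u(t)|² ≤ (1/2)c² + ∫₀ᵗ g(s)|u(s)| ds` on `[0,b]` with `g ≥ 0` integrable,
then `|u(t)| ≤ c + ∫₀ᵗ g(s) ds`. -/
theorem stmt8
    {H : Type*} [NormedAddCommGroup H] [InnerProductSpace ℝ H] [CompleteSpace H]
    (b c : ℝ) (hb : 0 < b) (hc : 0 ≤ c)
    (u : ℝ → H) (hu : ContinuousOn u (Set.Icc 0 b))
    (g : ℝ → ℝ)
    (hg : MeasureTheory.IntegrableOn g (Set.Icc 0 b))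
    (hgnn : ∀ s ∈ Set.Icc (0:ℝ) b, 0 ≤ g s)
    (hineq : ∀ t ∈ Set.Icc (0:ℝ) b,
      (1/2) * ‖u t‖ ^ 2 ≤ (1/2) * c ^ 2 + ∫ s in (0:ℝ)..t, g s * ‖u s‖) :
    ∀ t ∈ Set.Icc (0:ℝ) b, ‖u t‖ ≤ c + ∫ s in (0:ℝ)..t, g s := by
  intro T hT
  obtain ⟨hT0, hTb⟩ := hT
  have hfc : ContinuousOn (fun s => ‖u s‖) (Set.Icc 0 b) := hu.norm
  have huIcc : Set.uIcc (0:ℝ) b = Set.Icc 0 b := Set.uIcc_of_le hb.le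
  have hgI : IntervalIntegrable g volume 0 b := by
    rw [intervalIntegrable_iff_integrableOn_Icc_of_le hb.le]; exact hg
  have hmem : ∀ {s t : ℝ}, 0 ≤ s → s ≤ t → t ≤ b → Set.uIcc s t ⊆ Set.Icc 0 b := by
    intro s t h0 hst htb
    rw [Set.uIcc_of_le hst]; exact Set.Icc_subset_Icc h0 htb
  have hgI' : ∀ {s t : ℝ}, 0 ≤ s → s ≤ t → t ≤ b → IntervalIntegrable g volume s t := by
    intro s t h0 hst htb
    exact hgI.mono_set (by rw [huIcc]; exact hmem h0 hst htb)
  have hfgI : ∀ {s t : ℝ}, 0 ≤ s → s ≤ t → t ≤ b →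
      IntervalIntegrable (fun r => g r * ‖u r‖) volume s t := by
    intro s t h0 hst htb
    exact (hgI' h0 hst htb).mul_continuousOn (hfc.mono (hmem h0 hst htb))
  set G : ℝ → ℝ := fun t => ∫ s in (0:ℝ)..t, g s with hGdef
  set F : ℝ → ℝ := fun t => ∫ s in (0:ℝ)..t, g s * ‖u s‖ with hFdef
  have hGadd : ∀ {s t : ℝ}, 0 ≤ s → s ≤ t → t ≤ b → G t - G s = ∫ r in s..t, g r := by
    intro s t h0 hst htb
    have h1 := intervalIntegral.integral_add_adjacent_intervals
      (hgI' le_rfl h0 (hst.trans htb)) (hgI' h0 hst htb)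
    simp only [hGdef]; linarith
  have hFadd : ∀ {s t : ℝ}, 0 ≤ s → s ≤ t → t ≤ b →
      F t - F s = ∫ r in s..t, g r * ‖u r‖ := by
    intro s t h0 hst htb
    have h1 := intervalIntegral.integral_add_adjacent_intervals
      (hfgI le_rfl h0 (hst.trans htb)) (hfgI h0 hst htb)
    simp only [hFdef]; linarith
  have hGsubnn : ∀ {s t : ℝ}, 0 ≤ s → s ≤ t → t ≤ b → 0 ≤ G t - G s := by
    intro s t h0 hst htb
    rw [hGadd h0 hst htb]
    exact intervalIntegral.integral_nonneg hst
      (fun r hr => hgnn r ⟨h0.trans hr.1, hr.2.trans htb⟩)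
  have hFsubnn : ∀ {s t : ℝ}, 0 ≤ s → s ≤ t → t ≤ b → 0 ≤ F t - F s := by
    intro s t h0 hst htb
    rw [hFadd h0 hst htb]
    exact intervalIntegral.integral_nonneg hst
      (fun r hr => mul_nonneg (hgnn r ⟨h0.trans hr.1, hr.2.trans htb⟩) (norm_nonneg _))
  have hF0 : F 0 = 0 := by simp [hFdef]
  have hG0 : G 0 = 0 := by simp [hGdef]
  have hFnn : ∀ t ∈ Set.Icc (0:ℝ) b, 0 ≤ F t := by
    intro t ht
    have := hFsubnn le_rfl ht.1 ht.2
    linarith [hF0]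
  -- continuity of G
  have hGc : ContinuousOn G (Set.Icc 0 b) := by
    have h := intervalIntegral.continuousOn_primitive_interval
      (μ := volume) (f := g) (a := 0) (b := b) (by rw [huIcc]; exact hg)
    rwa [huIcc] at h
  -- main estimate for each ε > 0
  refine le_of_forall_pos_le_add ?_
  intro ε hε
  have hcε : (0:ℝ) < c + ε := by linarith
  set v : ℝ → ℝ := fun t => Real.sqrt ((c + ε) ^ 2 + 2 * F t) with hvdef
  have hvsq : ∀ t ∈ Set.Icc (0:ℝ) b, v t ^ 2 = (c + ε) ^ 2 + 2 * F t := by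
    intro t ht
    exact Real.sq_sqrt (by nlinarith [hFnn t ht])
  have hvge : ∀ t ∈ Set.Icc (0:ℝ) b, c + ε ≤ v t := by
    intro t ht
    have h1 : Real.sqrt ((c + ε) ^ 2) ≤ v t :=
      Real.sqrt_le_sqrt (by nlinarith [hFnn t ht])
    rwa [Real.sqrt_sq hcε.le] at h1
  have hfv : ∀ t ∈ Set.Icc (0:ℝ) b, ‖u t‖ ≤ v t := by
    intro t ht
    apply Real.le_sqrt_of_sq_le
    have h1 := hineq t ht
    simp only [hFdef]
    nlinarith
  have hvmono : ∀ {s t : ℝ}, 0 ≤ s → s ≤ t → t ≤ b → v s ≤ v t := by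
    intro s t h0 hst htb
    exact Real.sqrt_le_sqrt (by nlinarith [hFsubnn h0 hst htb])
  have hv0 : v 0 = c + ε := by
    simp only [hvdef, hF0]
    rw [mul_zero, add_zero, Real.sqrt_sq hcε.le]
  set V : ℝ := v b with hVdef
  have hVpos : 0 < V := lt_of_lt_of_le hcε (hvge b ⟨hb.le, le_rfl⟩)
  have hvV : ∀ t ∈ Set.Icc (0:ℝ) b, v t ≤ V := fun t ht => hvmono ht.1 ht.2 le_rfl
  -- quadratic key estimate
  have hkey : ∀ {s t : ℝ}, 0 ≤ s → s ≤ t → t ≤ b →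
      v t ^ 2 - v s ^ 2 ≤ 2 * v t * (G t - G s) := by
    intro s t h0 hst htb
    have hsI : s ∈ Set.Icc (0:ℝ) b := ⟨h0, hst.trans htb⟩
    have htI : t ∈ Set.Icc (0:ℝ) b := ⟨h0.trans hst, htb⟩
    have h1 : v t ^ 2 - v s ^ 2 = 2 * (∫ r in s..t, g r * ‖u r‖) := by
      rw [hvsq t htI, hvsq s hsI, ← hFadd h0 hst htb]; ring
    have h2 : (∫ r in s..t, g r * ‖u r‖) ≤ ∫ r in s..t, g r * v t := by
      apply intervalIntegral.integral_mono_on hst (hfgI h0 hst htb)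
        ((hgI' h0 hst htb).mul_const _)
      intro r hr
      have hrI : r ∈ Set.Icc (0:ℝ) b := ⟨h0.trans hr.1, hr.2.trans htb⟩
      exact mul_le_mul_of_nonneg_left
        ((hfv r hrI).trans (hvmono hrI.1 hr.2 htb)) (hgnn r hrI)
    have h3 : (∫ r in s..t, g r * v t) = (∫ r in s..t, g r) * v t :=
      intervalIntegral.integral_mul_const _ _
    calc v t ^ 2 - v s ^ 2 = 2 * ∫ r in s..t, g r * ‖u r‖ := h1
      _ ≤ 2 * ((∫ r in s..t, g r) * v t) := by rw [← h3]; linarith [h2]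
      _ = 2 * v t * (G t - G s) := by rw [← hGadd h0 hst htb]; ring
  -- step estimate with mesh control
  have hstep : ∀ η : ℝ, 0 < η → ∀ {s t : ℝ}, 0 ≤ s → s ≤ t → t ≤ b →
      G t - G s ≤ η →
      (v t - v s) * (2 * ε ^ 2) ≤ (2 * ε ^ 2 + V * η) * (G t - G s) := by
    intro η hη s t h0 hst htb hΔη
    have hsI : s ∈ Set.Icc (0:ℝ) b := ⟨h0, hst.trans htb⟩
    have htI : t ∈ Set.Icc (0:ℝ) b := ⟨h0.trans hst, htb⟩
    have hA : c + ε ≤ v s := hvge s hsI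
    have hAB : v s ≤ v t := hvmono h0 hst htb
    have hBV : v t ≤ V := hvV t htI
    have hΔ : 0 ≤ G t - G s := hGsubnn h0 hst htb
    have hq : (v t - v s) * (v s + v t) ≤ 2 * v t * (G t - G s) := by
      nlinarith [hkey h0 hst htb]
    have h2 : (v t - v s) * ε ≤ V * (G t - G s) := by
      nlinarith [mul_nonneg (sub_nonneg.mpr hAB)
          (by linarith : (0:ℝ) ≤ v s + v t - 2 * ε),
        mul_nonneg hΔ (sub_nonneg.mpr hBV)]
    have hABpos : 0 < v s + v t := by linarith
    have q1 : 2 * ε ^ 2 * ((v t - v s) * (v s + v t)) ≤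
        2 * ε ^ 2 * (2 * v t * (G t - G s)) :=
      mul_le_mul_of_nonneg_left hq (by positivity)
    have q2 : (2 * ε * (G t - G s)) * ((v t - v s) * ε) ≤
        (2 * ε * (G t - G s)) * (V * (G t - G s)) :=
      mul_le_mul_of_nonneg_left h2 (mul_nonneg (by positivity) hΔ)
    have q3 : 0 ≤ V * (G t - G s) * (η - (G t - G s)) * (2 * ε) :=
      mul_nonneg (mul_nonneg (mul_nonneg hVpos.le hΔ) (by linarith)) (by positivity)
    have q4 : 0 ≤ V * η * (G t - G s) * (v s + v t - 2 * ε) :=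
      mul_nonneg (mul_nonneg (mul_nonneg hVpos.le hη.le) hΔ) (by linarith)
    have h3 : ((v t - v s) * (2 * ε ^ 2)) * (v s + v t) ≤
        ((2 * ε ^ 2 + V * η) * (G t - G s)) * (v s + v t) := by
      nlinarith [q1, q2, q3, q4]
    exact le_of_mul_le_mul_right h3 hABpos
  -- limit over mesh: v T ≤ c + ε + G T
  have hvT : v T ≤ c + ε + G T := by
    refine le_of_forall_pos_le_add ?_
    intro δ hδ
    have hGTnn : 0 ≤ G T := by
      have := hGsubnn le_rfl hT0 hTb; linarith [hG0]
    have hGT1 : (0:ℝ) < G T + 1 := by linarith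
    set η : ℝ := δ * (2 * ε ^ 2) / ((G T + 1) * V) with hηdef
    have hηpos : 0 < η := by
      apply div_pos (by positivity) (by positivity)
    have hηeq : η * ((G T + 1) * V) = δ * (2 * ε ^ 2) := by
      rw [hηdef]; field_simp
    -- uniform continuity of G
    have hGuc := isCompact_Icc.uniformContinuousOn_of_continuous hGc
    rw [Metric.uniformContinuousOn_iff] at hGuc
    obtain ⟨δ', hδ'pos, hδ'⟩ := hGuc η hηpos
    obtain ⟨n, hn⟩ := exists_nat_gt (T / δ')
    set N : ℕ := n + 1 with hNdef
    have hNpos : (0:ℝ) < N := by positivity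
    have hNne : (N:ℝ) ≠ 0 := hNpos.ne'
    have hTN : T / N < δ' := by
      rw [div_lt_iff₀ hNpos]
      have hnN : (n:ℝ) < (N:ℝ) := by exact_mod_cast Nat.lt_succ_self n
      have h1 : T / δ' < (N:ℝ) := hn.trans hnN
      calc T = (T / δ') * δ' := by field_simp
        _ < N * δ' := mul_lt_mul_of_pos_right h1 hδ'pos
        _ = δ' * N := by ring
    set a : ℕ → ℝ := fun i => i * (T / N) with hadef
    have ha0 : a 0 = 0 := by simp [hadef]
    have haN : a N = T := by
      simp only [hadef]
      field_simp
    have hamono : ∀ i j : ℕ, i ≤ j → a i ≤ a j := by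
      intro i j hij
      apply mul_le_mul_of_nonneg_right (by exact_mod_cast hij)
      positivity
    have haIcc : ∀ i : ℕ, i ≤ N → a i ∈ Set.Icc (0:ℝ) b := by
      intro i hi
      constructor
      · simp only [hadef]; positivity
      · have h := hamono i N hi
        rw [haN] at h; linarith
    -- per interval
    have hper : ∀ i : ℕ, i < N →
        (v (a (i+1)) - v (a i)) * (2 * ε ^ 2) ≤
          (2 * ε ^ 2 + V * η) * (G (a (i+1)) - G (a i)) := by
      intro i hi
      have hi1 : i + 1 ≤ N := hi
      have h0i : 0 ≤ a i := (haIcc i (le_of_lt hi)).1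
      have hii : a i ≤ a (i+1) := hamono i (i+1) (Nat.le_succ i)
      have hib : a (i+1) ≤ b := (haIcc (i+1) hi1).2
      apply hstep η hηpos h0i hii hib
      have hdiff : a (i+1) - a i = T / N := by
        simp only [hadef]; push_cast; ring
      have hd : dist (a (i+1)) (a i) < δ' := by
        rw [Real.dist_eq, show a (i+1) - a i = T / N from hdiff,
          abs_of_nonneg (div_nonneg hT0 hNpos.le)]
        exact hTN
      have habs := hδ' (a (i+1)) (haIcc (i+1) hi1) (a i) (haIcc i (le_of_lt hi)) hd
      rw [Real.dist_eq] at habs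
      calc G (a (i+1)) - G (a i) ≤ |G (a (i+1)) - G (a i)| := le_abs_self _
        _ ≤ η := le_of_lt habs
    -- sum up
    have h1 := Finset.sum_range_sub (fun i => v (a i)) N
    have h2 := Finset.sum_range_sub (fun i => G (a i)) N
    simp only [ha0, haN] at h1 h2
    have hsum : (v T - v 0) * (2 * ε ^ 2) ≤ (2 * ε ^ 2 + V * η) * (G T - G 0) := by
      calc (v T - v 0) * (2 * ε ^ 2)
          = ∑ i ∈ Finset.range N, (v (a (i+1)) - v (a i)) * (2 * ε ^ 2) := by
            rw [← Finset.sum_mul, h1]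
        _ ≤ ∑ i ∈ Finset.range N, (2 * ε ^ 2 + V * η) * (G (a (i+1)) - G (a i)) :=
            Finset.sum_le_sum (fun i hi => hper i (Finset.mem_range.mp hi))
        _ = (2 * ε ^ 2 + V * η) * (G T - G 0) := by rw [← Finset.mul_sum, h2]
    rw [hv0, hG0, sub_zero] at hsum
    have hVη : V * η * G T ≤ δ * (2 * ε ^ 2) := by
      linarith [hηeq, mul_nonneg hηpos.le hVpos.le]
    have h9 : (v T - (c + ε)) * (2 * ε ^ 2) ≤ (G T + δ) * (2 * ε ^ 2) := by
      linarith [hsum, hVη]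
    have := le_of_mul_le_mul_right h9 (by positivity : (0:ℝ) < 2 * ε ^ 2)
    linarith
  have := hfv T ⟨hT0, hTb⟩
  simp only [hGdef] at hvT
  linarith
end
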